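/- Let G be an r-regular simple graph on a finite vertex set V with |V| = n, and let ℓ be an even natural number. Consider the set of all walks of length ℓ in G (i.e. triples (u, v, w) with w a walk from u to v of length ℓ), with the equivalence relation identifying each walk with its conjugate (p ∼ q iff the support of q equals the support of p or the reverse of the support of p). Then twice the number of equivalence classes equals n · (r^ℓ + r^{ℓ/2}). -/

import Mathlib

/-!
Reversal is an involution on the walks of length `ℓ`, and a walk is determined by its support,
so the classes are exactly the orbits of reversal. Counting each orbit twice gives the number of
walks plus the number of walks fixed by reversal. In an `r`-regular graph there are `n * r ^ k`
walks of length `k`, since the all-ones vector is an eigenvector of the adjacency matrix; and a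
walk of length `2m` equal to its reverse is determined by its second half, an arbitrary walk of
length `m`.
-/

open Finset Matrix

namespace Function.Involutive

variable {X : Type*} {σ : X → X}

lemma card_pair_add_card_fixed_pair [DecidableEq X] (hσ : Involutive σ) (x : X) :
    #{x, σ x} + #(({x, σ x} : Finset X).filter fun y => σ y = y) = 2 := by
  by_cases hx : σ x = x
  · simp [hx, filter_singleton]
  · have hx' : x ≠ σ x := Ne.symm hx
    rw [filter_eq_empty_iff.mpr (by simp [hσ x, hx, hx'])]
    simp [hx']

lemma equivalence_eq_or_eq (hσ : Involutive σ) :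
    Equivalence fun p q : X => q = p ∨ q = σ p where
  refl _ := .inl rfl
  symm {x _} := by rintro (rfl | rfl) <;> simp [hσ _]
  trans {x _ _} := by rintro (rfl | rfl) (rfl | rfl) <;> simp [hσ _]

theorem two_mul_card_quot [Fintype X] [DecidableEq X] (hσ : Involutive σ) :
    2 * Nat.card (Quot fun p q : X => q = p ∨ q = σ p) =
      Fintype.card X + Fintype.card {x // σ x = x} := by
  classical
  set R : X → X → Prop := fun p q => q = p ∨ q = σ p
  have : Fintype (Quot R) := Fintype.ofFinite _
  have fiber (x : X) : ({y | Quot.mk R y = Quot.mk R x} : Finset X) = {x, σ x} := by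
    ext y
    rw [mem_filter, Quot.eq, (equivalence_eq_or_eq hσ).eqvGen_iff]
    simp only [mem_univ, true_and, mem_insert, mem_singleton, eq_comm (a := x), hσ.eq_iff]
  have per_class (c : Quot R) :
      #{y | Quot.mk R y = c} + #{y | σ y = y ∧ Quot.mk R y = c} = 2 := by
    obtain ⟨x, rfl⟩ := Quot.exists_rep c
    rw [← filter_filter, filter_comm, fiber, card_pair_add_card_fixed_pair hσ]
  calc 2 * Nat.card (Quot R) = ∑ c : Quot R, 2 := by
        simp [Nat.card_eq_fintype_card, mul_comm]
    _ = ∑ c : Quot R, (#{y | Quot.mk R y = c} + #{y | σ y = y ∧ Quot.mk R y = c}) :=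
        (sum_congr rfl fun c _ => (per_class c).symm)
    _ = Fintype.card X + Fintype.card {x // σ x = x} := by
        rw [sum_add_distrib, Fintype.card_subtype, ← card_univ,
          card_eq_sum_card_fiberwise (f := Quot.mk R) (t := univ) (by simp),
          card_eq_sum_card_fiberwise (f := Quot.mk R) (s := {x | σ x = x}) (t := univ) (by simp)]
        simp [filter_filter]

end Function.Involutive

namespace SimpleGraph

variable {V : Type*} (G : SimpleGraph V)

abbrev WalksOfLength (k : ℕ) : Type _ := Σ u : V, Σ v : V, {w : G.Walk u v // w.length = k}

namespace WalksOfLength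

variable {G} {k : ℕ}

def reverse (p : G.WalksOfLength k) : G.WalksOfLength k :=
  ⟨p.2.1, p.1, p.2.2.1.reverse, by simp [p.2.2.2]⟩

lemma support_injective : Function.Injective fun p : G.WalksOfLength k => p.2.2.1.support := by
  rintro ⟨u, v, p, hp⟩ ⟨u', v', q, hq⟩ (h : p.support = q.support)
  obtain rfl : u = u' := by
    have h' := congrArg List.head? h
    rwa [← p.cons_tail_support, ← q.cons_tail_support, List.head?_cons, List.head?_cons,
      Option.some_inj] at h'
  obtain rfl : v = v' := by
    have h' := congrArg List.getLast? h
    rwa [← p.dropLast_support_concat, ← q.dropLast_support_concat, List.getLast?_concat,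
      List.getLast?_concat, Option.some_inj] at h'
  obtain rfl : p = q := Walk.ext_support h
  rfl

lemma reverse_involutive : Function.Involutive (reverse : G.WalksOfLength k → _) :=
  fun p => support_injective (by simp [reverse])

lemma support_eq_or_eq_reverse_iff {p q : G.WalksOfLength k} :
    (q.2.2.1.support = p.2.2.1.support ∨ q.2.2.1.support = p.2.2.1.support.reverse) ↔
      q = p ∨ q = p.reverse := by
  simp only [← support_injective.eq_iff, reverse, Walk.support_reverse]

def fixedReverseEquiv (m : ℕ) :
    {p : G.WalksOfLength (m + m) // p.reverse = p} ≃ G.WalksOfLength m where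
  toFun p := ⟨_, p.1.2.1, p.1.2.2.1.drop m, by simp [p.1.2.2.2]⟩
  invFun w := ⟨⟨w.2.1, w.2.1, w.2.2.1.reverse.append w.2.2.1, by simp [w.2.2.2]⟩,
    support_injective (by simp [reverse, Walk.reverse_append])⟩
  left_inv p := by
    obtain ⟨⟨u, v, p, hp⟩, hpal⟩ := p
    replace hpal : p.support.reverse = p.support := by
      simpa [reverse] using congrArg (fun p => p.2.2.1.support) hpal
    apply Subtype.ext
    apply support_injective
    simp only [Walk.support_append_eq_support_dropLast_append, Walk.support_reverse,
      Walk.drop_support_eq_support_drop_min, hp]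
    have hlen : p.support.length = m + m + 1 := by simp [hp]
    rw [min_eq_left (Nat.le_add_right m m), List.dropLast_reverse, List.tail_drop,
      List.reverse_drop, hpal, hlen, show m + m + 1 - (m + 1) = m by omega, List.take_append_drop]
  right_inv w := by
    obtain ⟨u, v, w, hw⟩ := w
    apply support_injective
    simp only [Walk.drop_support_eq_support_drop_min, Walk.support_append_eq_support_dropLast_append,
      Walk.length_append, Walk.length_reverse, hw]
    rw [min_eq_left (Nat.le_add_right m m), List.drop_left' (by simp [hw])]

end WalksOfLength

variable [Fintype V] [DecidableEq V] [DecidableRel G.Adj]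

lemma adjMatrix_pow_mulVec_const_of_regular {α : Type*} [Semiring α] {r : ℕ}
    (hreg : G.IsRegularOfDegree r) (k : ℕ) (a : α) :
    (G.adjMatrix α ^ k) *ᵥ Function.const V a = Function.const V ((r : α) ^ k * a) := by
  induction k with
  | zero => simp [one_mulVec]
  | succ k ih =>
    ext v
    rw [pow_succ', ← mulVec_mulVec, ih, adjMatrix_mulVec_const_apply_of_regular hreg, pow_succ',
      mul_assoc]
    rfl

lemma card_walksOfLength_of_regular {r : ℕ} (hreg : G.IsRegularOfDegree r) (k : ℕ) :
    Fintype.card (G.WalksOfLength k) = Fintype.card V * r ^ k := by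
  have from_vertex (u : V) : ∑ v, Fintype.card {w : G.Walk u v // w.length = k} = r ^ k := by
    calc ∑ v, Fintype.card {w : G.Walk u v // w.length = k}
        = ∑ v, (G.adjMatrix ℕ ^ k) u v := by simp_rw [adjMatrix_pow_apply_eq_card_walk]; rfl
      _ = r ^ k := by
        simpa [mulVec, dotProduct] using
          congrFun (G.adjMatrix_pow_mulVec_const_of_regular hreg k (1 : ℕ)) u
  simp [Fintype.card_sigma, from_vertex]

end SimpleGraph

/-- Let `G` be an `r`-regular simple graph on `n` vertices and `ℓ` even. On the set of all
walks of length `ℓ` in `G`, identify each walk with its conjugate (`p ∼ q` iff the support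
of `q` equals the support of `p` or the reverse of the support of `p`). Then twice the
number of equivalence classes equals `n · (r^ℓ + r^{ℓ/2})`. -/
theorem two_mul_card_walk_classes_even {V : Type*} [Fintype V] [DecidableEq V]
    (G : SimpleGraph V) [DecidableRel G.Adj] (r : ℕ) (hreg : G.IsRegularOfDegree r)
    (ℓ : ℕ) (hℓ : Even ℓ) :
    2 * Nat.card (Quot (fun p q : Σ u : V, Σ v : V, {w : G.Walk u v // w.length = ℓ} =>
        q.2.2.1.support = p.2.2.1.support ∨ q.2.2.1.support = p.2.2.1.support.reverse)) =
      Fintype.card V * (r ^ ℓ + r ^ (ℓ / 2)) := by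
  obtain ⟨m, rfl⟩ := hℓ
  open SimpleGraph.WalksOfLength in
  rw [Nat.card_congr (Quot.congrRight fun _ _ => support_eq_or_eq_reverse_iff),
    reverse_involutive.two_mul_card_quot, Fintype.card_congr (fixedReverseEquiv m),
    G.card_walksOfLength_of_regular hreg, G.card_walksOfLength_of_regular hreg,
    ← two_mul, Nat.mul_div_cancel_left m two_pos, mul_add]
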